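/- arXiv:2311.18384 — 5 statements merged into one kernel-verified Lean document; each statement's English description precedes it below -/
import Mathlib

section
/- Let φ be real-valued and smooth on (A,B) with φ'(x) ≥ 1 for all x ∈ (A,B) and φ' monotonic, and let ψ be continuously differentiable on [A,B]. Then for every λ > 0, |∫_A^B e^{iλφ(x)} ψ(x) dx| ≤ c λ^{-1} (|ψ(B)| + ∫_A^B |ψ'(x)| dx) for an absolute constant c independent of φ, ψ, λ. -/
open MeasureTheory Set

open Filter Topology intervalIntegral

lemma vdcAux_deriv_nonneg {f : ℝ → ℝ} {s : Set ℝ} (hs : IsOpen s) (hm : MonotoneOn f s)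
    {x f' : ℝ} (hx : x ∈ s) (hd : HasDerivAt f f' x) : 0 ≤ f' := by
  have h1 : HasDerivWithinAt f f' (s ∩ Ioi x) x := hd.hasDerivWithinAt
  have hx' : x ∉ s ∩ Ioi x := fun h => lt_irrefl x h.2
  rw [hasDerivWithinAt_iff_tendsto_slope' hx'] at h1
  have hne : (𝓝[s ∩ Ioi x] x).NeBot := by
    rw [nhdsWithin_inter_of_mem (mem_nhdsWithin_of_mem_nhds (hs.mem_nhds hx))]
    exact nhdsGT_neBot x
  refine ge_of_tendsto h1 ?_
  filter_upwards [self_mem_nhdsWithin] with y hy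
  have h2 : f x ≤ f y := hm hx hy.1 (le_of_lt hy.2)
  have h3 : (0:ℝ) < y - x := sub_pos.2 hy.2
  rw [slope_def_field]
  exact div_nonneg (sub_nonneg.2 h2) h3.le

lemma vdcAux_norm_exp (t r : ℝ) : ‖Complex.exp (Complex.I * t * r)‖ = 1 := by
  rw [Complex.norm_exp]
  simp [Complex.mul_re]

lemma vdcAux_core (A B : ℝ) (φ : ℝ → ℝ)
    (hφ : ContDiffOn ℝ (⊤ : ℕ∞) φ (Ioo A B))
    (hφ1 : ∀ x ∈ Ioo A B, 1 ≤ deriv φ x)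
    (hmono : MonotoneOn (deriv φ) (Ioo A B) ∨ AntitoneOn (deriv φ) (Ioo A B))
    (t : ℝ) (ht : 0 < t) {a b : ℝ} (ha : A < a) (hab : a ≤ b) (hb : b < B) :
    ‖∫ x in a..b, Complex.exp (Complex.I * t * φ x)‖ ≤ 3 / t := by
  set s : Set ℝ := Ioo A B with hs
  have hsub : Icc a b ⊆ s := fun x hx => ⟨lt_of_lt_of_le ha hx.1, lt_of_le_of_lt hx.2 hb⟩
  have huIcc : uIcc a b = Icc a b := uIcc_of_le hab
  set g : ℝ → ℝ := deriv φ with hgdef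
  -- smoothness facts
  have hg : ContDiffOn ℝ (⊤ : ℕ∞) g s := hφ.deriv_of_isOpen isOpen_Ioo (by simp)
  have hφd : ∀ x ∈ s, HasDerivAt φ (g x) x := fun x hx =>
    (((hφ.differentiableOn (by simp)) x hx).differentiableAt (isOpen_Ioo.mem_nhds hx)).hasDerivAt
  have hgd : ∀ x ∈ s, HasDerivAt g (deriv g x) x := fun x hx =>
    (((hg.differentiableOn (by simp)) x hx).differentiableAt (isOpen_Ioo.mem_nhds hx)).hasDerivAt
  have hgc : ContinuousOn g s := hg.continuousOn
  have hg2 : ContDiffOn ℝ (⊤ : ℕ∞) (deriv g) s := hg.deriv_of_isOpen isOpen_Ioo (by simp)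
  have hgc' : ContinuousOn (deriv g) s := hg2.continuousOn
  have hφc : ContinuousOn φ s := hφ.continuousOn
  have hgpos : ∀ x ∈ s, (0:ℝ) < g x := fun x hx => lt_of_lt_of_le one_pos (hφ1 x hx)
  have hne : ∀ x ∈ s, (Complex.I * t * g x : ℂ) ≠ 0 := by
    intro x hx
    simp only [ne_eq, mul_eq_zero, Complex.I_ne_zero, Complex.ofReal_eq_zero, false_or, not_or]
    exact ⟨ht.ne', (hgpos x hx).ne'⟩
  -- the functions for IBP
  set v : ℝ → ℂ := fun x => Complex.exp (Complex.I * t * φ x) with hv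
  set u : ℝ → ℂ := fun x => 1 / (Complex.I * t * g x) with hu
  set v' : ℝ → ℂ := fun x => (Complex.I * t * g x) * Complex.exp (Complex.I * t * φ x) with hv'
  set u' : ℝ → ℂ := fun x => -(Complex.I * t * deriv g x) / (Complex.I * t * g x) ^ 2 with hu'
  have hvd : ∀ x ∈ Icc a b, HasDerivAt v (v' x) x := by
    intro x hx
    have h1 : HasDerivAt (fun y => Complex.I * (t : ℂ) * ((φ y : ℝ) : ℂ)) (Complex.I * t * g x) x :=
      ((hφd x (hsub hx)).ofReal_comp).const_mul (Complex.I * t)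
    have h2 := h1.cexp
    rw [hv', hv]
    convert h2 using 1
    ring
  have hud : ∀ x ∈ Icc a b, HasDerivAt u (u' x) x := by
    intro x hx
    have h1 : HasDerivAt (fun y => Complex.I * (t : ℂ) * ((g y : ℝ) : ℂ)) (Complex.I * t * deriv g x) x :=
      ((hgd x (hsub hx)).ofReal_comp).const_mul (Complex.I * t)
    have h2 := (hasDerivAt_const x (1:ℂ)).div h1 (hne x (hsub hx))
    rw [hu, hu']
    convert h2 using 1
    · rfl
    · rfl
    · ring
  -- integrabilities
  have hvcont : ContinuousOn v (Icc a b) :=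
    ((continuousOn_const.mul ((Complex.continuous_ofReal.comp_continuousOn
        (hφc.mono hsub)))).cexp)
  have hv'int : IntervalIntegrable v' volume a b := by
    apply ContinuousOn.intervalIntegrable
    rw [huIcc]
    exact (continuousOn_const.mul ((Complex.continuous_ofReal.comp_continuousOn
        (hgc.mono hsub)))).mul ((continuousOn_const.mul ((Complex.continuous_ofReal.comp_continuousOn
        (hφc.mono hsub)))).cexp)
  have hu'int : IntervalIntegrable u' volume a b := by
    apply ContinuousOn.intervalIntegrable
    rw [huIcc]
    apply ContinuousOn.div
    · exact (continuousOn_const.mul ((Complex.continuous_ofReal.comp_continuousOn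
        (hgc'.mono hsub)))).neg
    · exact (continuousOn_const.mul ((Complex.continuous_ofReal.comp_continuousOn
        (hgc.mono hsub)))).pow 2
    · exact fun x hx => pow_ne_zero 2 (hne x (hsub hx))
  -- IBP
  have hibp : ∫ x in a..b, v x = u b * v b - u a * v a - ∫ x in a..b, u' x * v x := by
    have h1 : ∫ x in a..b, u x * v' x = u b * v b - u a * v a - ∫ x in a..b, u' x * v x :=
      integral_mul_deriv_eq_deriv_mul (fun x hx => hud x (huIcc ▸ hx))
        (fun x hx => hvd x (huIcc ▸ hx)) hu'int hv'int
    rw [← h1]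
    apply integral_congr
    intro x hx
    rw [huIcc] at hx
    simp only [hu, hv, hv']
    rw [one_div, ← mul_assoc, inv_mul_cancel₀ (hne x (hsub hx)), one_mul]
  -- norms
  have hnormu : ∀ x ∈ Icc a b, ‖u x‖ ≤ 1 / t := by
    intro x hx
    have hgx := hgpos x (hsub hx)
    have hg1 := hφ1 x (hsub hx)
    rw [hu]
    simp only [one_div, norm_inv, norm_mul, Complex.norm_I, Complex.norm_real, Real.norm_eq_abs,
      abs_of_pos ht, abs_of_pos hgx, one_mul]
    exact inv_anti₀ ht (le_mul_of_one_le_right ht.le hg1)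
  -- real reciprocal of g
  set w : ℝ → ℝ := fun x => (g x)⁻¹ with hw
  set w' : ℝ → ℝ := fun x => -deriv g x / g x ^ 2 with hw'
  have hwd : ∀ x ∈ Icc a b, HasDerivAt w (w' x) x := fun x hx =>
    (hgd x (hsub hx)).inv (hgpos x (hsub hx)).ne'
  have hw'int : IntervalIntegrable w' volume a b := by
    apply ContinuousOn.intervalIntegrable
    rw [huIcc]
    exact ((hgc'.mono hsub).neg.div ((hgc.mono hsub).pow 2)
      (fun x hx => pow_ne_zero 2 (hgpos x (hsub hx)).ne'))
  have hwftc : ∫ x in a..b, w' x = w b - w a := by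
    refine integral_eq_sub_of_hasDerivAt (fun x hx => hwd x (huIcc ▸ hx)) hw'int
  have hw01 : ∀ x ∈ Icc a b, w x ∈ Ioc (0:ℝ) 1 := by
    intro x hx
    constructor
    · exact inv_pos.2 (hgpos x (hsub hx))
    · exact inv_le_one_of_one_le₀ (hφ1 x (hsub hx))
  -- sign of w'
  have hsign : (∀ x ∈ Icc a b, w' x ≤ 0) ∨ (∀ x ∈ Icc a b, 0 ≤ w' x) := by
    rcases hmono with hm | hm
    · left
      intro x hx
      have h0 : 0 ≤ deriv g x := vdcAux_deriv_nonneg isOpen_Ioo hm (hsub hx) (hgd x (hsub hx))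
      have h2 : (0:ℝ) < g x ^ 2 := pow_pos (hgpos x (hsub hx)) 2
      exact div_nonpos_of_nonpos_of_nonneg (neg_nonpos.2 h0) h2.le
    · right
      intro x hx
      have hm' : MonotoneOn (fun y => -g y) s := fun y hy z hz hyz => neg_le_neg (hm hy hz hyz)
      have h0 : 0 ≤ -deriv g x :=
        vdcAux_deriv_nonneg isOpen_Ioo hm' (hsub hx) (hgd x (hsub hx)).neg
      have h2 : (0:ℝ) < g x ^ 2 := pow_pos (hgpos x (hsub hx)) 2
      exact div_nonneg h0 h2.le
  -- total variation bound
  have hvar : ∫ x in a..b, |w' x| ≤ 1 := by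
    rcases hsign with hsg | hsg
    · have : ∫ x in a..b, |w' x| = ∫ x in a..b, -w' x := by
        apply integral_congr
        intro x hx
        rw [huIcc] at hx
        exact abs_of_nonpos (hsg x hx)
      rw [this, intervalIntegral.integral_neg, hwftc, neg_sub]
      have := hw01 a ⟨le_refl a, hab⟩
      have hb' := hw01 b ⟨hab, le_refl b⟩
      linarith [this.2, hb'.1]
    · have : ∫ x in a..b, |w' x| = ∫ x in a..b, w' x := by
        apply integral_congr
        intro x hx
        rw [huIcc] at hx
        exact abs_of_nonneg (hsg x hx)
      rw [this, hwftc]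
      have := hw01 a ⟨le_refl a, hab⟩
      have hb' := hw01 b ⟨hab, le_refl b⟩
      linarith [this.1, hb'.2]
  -- norm of u'
  have hnormu' : ∀ x ∈ Icc a b, ‖u' x‖ = |w' x| / t := by
    intro x hx
    have hgx := hgpos x (hsub hx)
    rw [hu', hw']
    rw [norm_div, norm_neg, norm_pow]
    simp only [norm_mul, Complex.norm_I, Complex.norm_real, Real.norm_eq_abs,
      abs_of_pos ht, one_mul, abs_of_pos hgx]
    rw [abs_div, abs_neg, abs_pow, abs_of_pos hgx]
    field_simp
  -- bound the correction integral
  have hcorr : ‖∫ x in a..b, u' x * v x‖ ≤ 1 / t := by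
    calc ‖∫ x in a..b, u' x * v x‖ ≤ ∫ x in a..b, ‖u' x * v x‖ :=
          norm_integral_le_integral_norm hab
      _ = ∫ x in a..b, |w' x| / t := by
          apply integral_congr
          intro x hx
          rw [huIcc] at hx
          show ‖u' x * v x‖ = |w' x| / t
          rw [norm_mul, hv]
          rw [vdcAux_norm_exp, mul_one]
          exact hnormu' x hx
      _ = (∫ x in a..b, |w' x|) / t := by rw [intervalIntegral.integral_div]
      _ ≤ 1 / t := by
          gcongr
  -- conclude
  rw [hibp]
  have h1 : ‖u b * v b‖ ≤ 1 / t := by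
    simp only [norm_mul, hv]
    rw [vdcAux_norm_exp, mul_one]
    exact hnormu b ⟨hab, le_refl b⟩
  have h2 : ‖u a * v a‖ ≤ 1 / t := by
    simp only [norm_mul, hv]
    rw [vdcAux_norm_exp, mul_one]
    exact hnormu a ⟨le_refl a, hab⟩
  calc ‖u b * v b - u a * v a - ∫ x in a..b, u' x * v x‖
      ≤ ‖u b * v b - u a * v a‖ + ‖∫ x in a..b, u' x * v x‖ := norm_sub_le _ _
    _ ≤ (‖u b * v b‖ + ‖u a * v a‖) + ‖∫ x in a..b, u' x * v x‖ := by
        gcongr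
        exact norm_sub_le _ _
    _ ≤ (1 / t + 1 / t) + 1 / t := add_le_add (add_le_add h1 h2) hcorr
    _ = 3 / t := by ring

lemma vdcAux_intInt (A B : ℝ) (φ : ℝ → ℝ) (hφc : ContinuousOn φ (Ioo A B)) (t : ℝ)
    {c d : ℝ} (hc : A ≤ c) (hcd : c ≤ d) (hd : d ≤ B) :
    IntervalIntegrable (fun x => Complex.exp (Complex.I * t * φ x)) volume c d := by
  set f : ℝ → ℂ := fun x => Complex.exp (Complex.I * t * φ x) with hf
  apply IntervalIntegrable.mono_fun' (g := fun _ => (1:ℝ)) intervalIntegrable_const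
  · have h1 : ContinuousOn f (Ioo A B) :=
      ((continuousOn_const.mul (Complex.continuous_ofReal.comp_continuousOn hφc)).cexp)
    have h2 : AEStronglyMeasurable f (volume.restrict (Ioo A B)) :=
      h1.aestronglyMeasurable measurableSet_Ioo
    apply h2.mono_measure
    apply Measure.restrict_mono_ae
    have hB : ∀ᵐ x : ℝ, x ≠ B := by
      rw [ae_iff]
      simpa using measure_singleton B
    filter_upwards [hB] with y hy hymem
    rw [uIoc_of_le hcd] at hymem
    exact ⟨lt_of_le_of_lt hc hymem.1, lt_of_le_of_ne (le_trans hymem.2 hd) hy⟩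
  · apply Filter.Eventually.of_forall
    intro y
    rw [hf]
    simp only [vdcAux_norm_exp]
    simp

lemma vdcAux_F_bound (A B : ℝ) (φ : ℝ → ℝ)
    (hφ : ContDiffOn ℝ (⊤ : ℕ∞) φ (Ioo A B))
    (hφ1 : ∀ x ∈ Ioo A B, 1 ≤ deriv φ x)
    (hmono : MonotoneOn (deriv φ) (Ioo A B) ∨ AntitoneOn (deriv φ) (Ioo A B))
    (t : ℝ) (ht : 0 < t) {x : ℝ} (hx : x ∈ Icc A B) :
    ‖∫ y in A..x, Complex.exp (Complex.I * t * φ y)‖ ≤ 3 / t := by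
  set f : ℝ → ℂ := fun y => Complex.exp (Complex.I * t * φ y) with hf
  rcases eq_or_lt_of_le hx.1 with h | hAx
  · rw [← h]
    simp only [intervalIntegral.integral_same, norm_zero]
    positivity
  have key : ∀ δ : ℝ, 0 < δ → δ < (x - A)/2 → ‖∫ y in A..x, f y‖ ≤ 3/t + 2*δ := by
    intro δ hδ hδ2
    have ha1 : A < A + δ := by linarith
    have h2 : A + δ ≤ x - δ := by linarith
    have h3 : x - δ < B := by
      have := hx.2
      linarith
    have hxB := hx.2
    have i1 : IntervalIntegrable f volume A (A+δ) :=
      vdcAux_intInt A B φ hφ.continuousOn t (le_refl A) ha1.le (by linarith)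
    have i2 : IntervalIntegrable f volume (A+δ) (x-δ) :=
      vdcAux_intInt A B φ hφ.continuousOn t ha1.le h2 h3.le
    have i3 : IntervalIntegrable f volume (x-δ) x :=
      vdcAux_intInt A B φ hφ.continuousOn t (by linarith) (by linarith) hxB
    have i12 : IntervalIntegrable f volume A (x-δ) := i1.trans i2
    have hsplit : ∫ y in A..x, f y =
        ((∫ y in A..A+δ, f y) + ∫ y in A+δ..x-δ, f y) + ∫ y in x-δ..x, f y := by
      rw [intervalIntegral.integral_add_adjacent_intervals i1 i2,
        intervalIntegral.integral_add_adjacent_intervals i12 i3]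
    have hb1 : ‖∫ y in A..A+δ, f y‖ ≤ δ := by
      have := intervalIntegral.norm_integral_le_of_norm_le_const (a := A) (b := A + δ)
        (C := 1) (f := f) (fun y _ => by rw [hf]; exact le_of_eq (vdcAux_norm_exp t (φ y)))
      calc ‖∫ y in A..A+δ, f y‖ ≤ 1 * |A + δ - A| := this
        _ = δ := by rw [one_mul]; rw [add_sub_cancel_left]; exact abs_of_pos hδ
    have hb3 : ‖∫ y in x-δ..x, f y‖ ≤ δ := by
      have := intervalIntegral.norm_integral_le_of_norm_le_const (a := x - δ) (b := x)
        (C := 1) (f := f) (fun y _ => by rw [hf]; exact le_of_eq (vdcAux_norm_exp t (φ y)))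
      calc ‖∫ y in x-δ..x, f y‖ ≤ 1 * |x - (x - δ)| := this
        _ = δ := by rw [one_mul]; rw [sub_sub_cancel]; exact abs_of_pos hδ
    have hb2 : ‖∫ y in A+δ..x-δ, f y‖ ≤ 3 / t :=
      vdcAux_core A B φ hφ hφ1 hmono t ht ha1 h2 h3
    calc ‖∫ y in A..x, f y‖
        = ‖((∫ y in A..A+δ, f y) + ∫ y in A+δ..x-δ, f y) + ∫ y in x-δ..x, f y‖ := by
          rw [hsplit]
      _ ≤ ‖(∫ y in A..A+δ, f y) + ∫ y in A+δ..x-δ, f y‖ + ‖∫ y in x-δ..x, f y‖ :=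
          norm_add_le _ _
      _ ≤ (‖∫ y in A..A+δ, f y‖ + ‖∫ y in A+δ..x-δ, f y‖) + ‖∫ y in x-δ..x, f y‖ := by
          gcongr
          exact norm_add_le _ _
      _ ≤ (δ + 3 / t) + δ := add_le_add (add_le_add hb1 hb2) hb3
      _ = 3 / t + 2 * δ := by ring
  apply le_of_forall_pos_le_add
  intro ε hε
  have hδpos : 0 < min (ε / 2) ((x - A) / 4) := by
    apply lt_min
    · linarith
    · linarith
  set δ := min (ε / 2) ((x - A) / 4) with hδdef
  have h1 := key δ hδpos (by
    have : δ ≤ (x - A) / 4 := min_le_right _ _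
    linarith)
  have h2 : 2 * δ ≤ ε := by
    have : δ ≤ ε / 2 := min_le_left _ _
    linarith
  linarith

/-- Van der Corput's lemma, first order: if `φ` is smooth on `(A,B)` with `φ' ≥ 1`
and `φ'` monotonic, and `ψ` is `C¹` on `[A,B]`, then the oscillatory integral decays
like `λ⁻¹`. -/
theorem vanDerCorput_first_order :
    ∃ c > 0, ∀ (A B : ℝ) (φ : ℝ → ℝ) (ψ : ℝ → ℂ), A < B →
      ContDiffOn ℝ (⊤ : ℕ∞) φ (Set.Ioo A B) →
      (∀ x ∈ Set.Ioo A B, 1 ≤ deriv φ x) →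
      (MonotoneOn (deriv φ) (Set.Ioo A B) ∨ AntitoneOn (deriv φ) (Set.Ioo A B)) →
      ContDiffOn ℝ 1 ψ (Set.Icc A B) →
      ∀ t : ℝ, 0 < t →
        ‖∫ x in A..B, Complex.exp (Complex.I * t * φ x) * ψ x‖ ≤
          c * t⁻¹ * (‖ψ B‖ + ∫ x in A..B, ‖deriv ψ x‖) := by
  refine ⟨3, by norm_num, ?_⟩
  intro A B φ ψ hAB hφ hφ1 hmono hψ t ht
  set f : ℝ → ℂ := fun y => Complex.exp (Complex.I * t * φ y) with hf
  set F : ℝ → ℂ := fun x => ∫ y in A..x, f y with hF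
  -- basic facts
  have hfint : ∀ x ∈ Icc A B, IntervalIntegrable f volume A x := fun x hx =>
    vdcAux_intInt A B φ hφ.continuousOn t (le_refl A) hx.1 hx.2
  have hFbd : ∀ x ∈ Icc A B, ‖F x‖ ≤ 3 / t := fun x hx =>
    vdcAux_F_bound A B φ hφ hφ1 hmono t ht hx
  have huIcc : uIcc A B = Icc A B := uIcc_of_le hAB.le
  have hFcont : ContinuousOn F (Icc A B) := by
    rw [hF, ← huIcc]
    apply continuousOn_primitive_interval
    rw [huIcc]
    exact (intervalIntegrable_iff_integrableOn_Icc_of_le hAB.le).1 (hfint B ⟨hAB.le, le_refl B⟩)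
  have hfc : ContinuousOn f (Ioo A B) :=
    ((continuousOn_const.mul (Complex.continuous_ofReal.comp_continuousOn
      hφ.continuousOn)).cexp)
  have hFd : ∀ x ∈ Ioo A B, HasDerivAt F (f x) x := by
    intro x hx
    refine intervalIntegral.integral_hasDerivAt_right
      (hfint x ⟨hx.1.le, hx.2.le⟩) ?_ ?_
    · exact hfc.stronglyMeasurableAtFilter isOpen_Ioo x hx
    · exact hfc.continuousAt (isOpen_Ioo.mem_nhds hx)
  -- psi facts
  have hψc : ContinuousOn ψ (Icc A B) := hψ.continuousOn
  have hψd : ∀ x ∈ Ioo A B, HasDerivAt ψ (deriv ψ x) x := by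
    intro x hx
    have h1 : DifferentiableWithinAt ℝ ψ (Icc A B) x :=
      (hψ.differentiableOn one_ne_zero) x ⟨hx.1.le, hx.2.le⟩
    exact (h1.differentiableAt (Icc_mem_nhds hx.1 hx.2)).hasDerivAt
  have hψ'c : ContinuousOn (derivWithin ψ (Icc A B)) (Icc A B) :=
    hψ.continuousOn_derivWithin (uniqueDiffOn_Icc hAB) le_rfl
  have hψ'eq : ∀ x ∈ Ioo A B, deriv ψ x = derivWithin ψ (Icc A B) x := by
    intro x hx
    have h1 : DifferentiableWithinAt ℝ ψ (Icc A B) x :=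
      (hψ.differentiableOn one_ne_zero) x ⟨hx.1.le, hx.2.le⟩
    exact ((h1.differentiableAt (Icc_mem_nhds hx.1 hx.2)).derivWithin
      (uniqueDiffOn_Icc hAB x ⟨hx.1.le, hx.2.le⟩)).symm
  -- a.e. facts on Ioc A B
  have haeIoo : ∀ᵐ y ∂(volume.restrict (Ioc A B)), y ∈ Ioo A B := by
    have hB : ∀ᵐ y : ℝ, y ≠ B := by
      rw [ae_iff]
      simpa using measure_singleton B
    have hmem := ae_restrict_mem (μ := volume) (measurableSet_Ioc (a := A) (b := B))
    filter_upwards [hmem, ae_restrict_of_ae hB] with y h1 h2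
    exact ⟨h1.1, lt_of_le_of_ne h1.2 h2⟩
  have hψ'ae : (deriv ψ) =ᵐ[volume.restrict (Ioc A B)] (derivWithin ψ (Icc A B)) := by
    filter_upwards [haeIoo] with y hy
    exact hψ'eq y hy
  -- interval integrability of deriv ψ
  have hψ'wint : IntervalIntegrable (derivWithin ψ (Icc A B)) volume A B := by
    apply ContinuousOn.intervalIntegrable
    rw [huIcc]
    exact hψ'c
  have hψ'int : IntervalIntegrable (deriv ψ) volume A B := by
    rw [intervalIntegrable_iff_integrableOn_Ioc_of_le hAB.le]
    exact (((intervalIntegrable_iff_integrableOn_Ioc_of_le hAB.le).1 hψ'wint)).congr_fun_ae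
      hψ'ae.symm
  -- measurability of f on Ioc
  have hfaesm : AEStronglyMeasurable f (volume.restrict (Ioc A B)) := by
    have h2 : AEStronglyMeasurable f (volume.restrict (Ioo A B)) :=
      hfc.aestronglyMeasurable measurableSet_Ioo
    apply h2.mono_measure
    apply Measure.restrict_mono_ae
    have hB : ∀ᵐ y : ℝ, y ≠ B := by
      rw [ae_iff]
      simpa using measure_singleton B
    filter_upwards [hB] with y hy hymem
    exact ⟨hymem.1, lt_of_le_of_ne hymem.2 hy⟩
  have hψaesm : AEStronglyMeasurable ψ (volume.restrict (Ioc A B)) :=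
    (hψc.mono Ioc_subset_Icc_self).aestronglyMeasurable measurableSet_Ioc
  have hFaesm : AEStronglyMeasurable F (volume.restrict (Ioc A B)) :=
    (hFcont.mono Ioc_subset_Icc_self).aestronglyMeasurable measurableSet_Ioc
  have hψ'aesm : AEStronglyMeasurable (deriv ψ) (volume.restrict (Ioc A B)) :=
    ((hψ'c.mono Ioc_subset_Icc_self).aestronglyMeasurable measurableSet_Ioc).congr hψ'ae.symm
  -- bound for ψ
  obtain ⟨C, hC⟩ := (isCompact_Icc (a := A) (b := B)).exists_bound_of_continuousOn hψc
  -- integrability of f * ψ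
  have hfψint : IntervalIntegrable (fun x => f x * ψ x) volume A B := by
    apply IntervalIntegrable.mono_fun' (g := fun _ => C) intervalIntegrable_const
    · rw [uIoc_of_le hAB.le]
      exact hfaesm.mul hψaesm
    · rw [uIoc_of_le hAB.le]
      filter_upwards [ae_restrict_mem (μ := volume) (measurableSet_Ioc (a := A) (b := B))] with y hy
      have : ‖f y * ψ y‖ = ‖ψ y‖ := by
        rw [norm_mul, hf, vdcAux_norm_exp, one_mul]
      rw [this]
      exact hC y (Ioc_subset_Icc_self hy)
  -- integrability of F * deriv ψ
  have hFψ'int : IntervalIntegrable (fun x => F x * deriv ψ x) volume A B := by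
    apply IntervalIntegrable.mono_fun' (g := fun x => (3 / t) * ‖deriv ψ x‖)
      (hψ'int.norm.const_mul (3 / t))
    · rw [uIoc_of_le hAB.le]
      exact hFaesm.mul hψ'aesm
    · rw [uIoc_of_le hAB.le]
      filter_upwards [ae_restrict_mem (μ := volume) (measurableSet_Ioc (a := A) (b := B))] with y hy
      rw [norm_mul]
      apply mul_le_mul_of_nonneg_right (hFbd y (Ioc_subset_Icc_self hy)) (norm_nonneg _)
  -- FTC for G = F * ψ
  have hftc : ∫ x in A..B, (f x * ψ x + F x * deriv ψ x) = F B * ψ B - F A * ψ A := by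
    apply intervalIntegral.integral_eq_sub_of_hasDeriv_right_of_le hAB.le
    · exact hFcont.mul hψc
    · intro x hx
      exact ((hFd x hx).mul (hψd x hx)).hasDerivWithinAt
    · exact hfψint.add hFψ'int
  have hFA : F A = 0 := intervalIntegral.integral_same
  have hsplit : ∫ x in A..B, f x * ψ x = F B * ψ B - ∫ x in A..B, F x * deriv ψ x := by
    rw [intervalIntegral.integral_add hfψint hFψ'int, hFA, zero_mul, sub_zero] at hftc
    linear_combination hftc
  -- final bounds
  have hb1 : ‖F B * ψ B‖ ≤ 3 / t * ‖ψ B‖ := by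
    rw [norm_mul]
    exact mul_le_mul_of_nonneg_right (hFbd B ⟨hAB.le, le_refl B⟩) (norm_nonneg _)
  have hb2 : ‖∫ x in A..B, F x * deriv ψ x‖ ≤ 3 / t * ∫ x in A..B, ‖deriv ψ x‖ := by
    calc ‖∫ x in A..B, F x * deriv ψ x‖ ≤ ∫ x in A..B, ‖F x * deriv ψ x‖ :=
          intervalIntegral.norm_integral_le_integral_norm hAB.le
      _ ≤ ∫ x in A..B, (3 / t) * ‖deriv ψ x‖ := by
          apply intervalIntegral.integral_mono_on hAB.le hFψ'int.norm
            (hψ'int.norm.const_mul (3 / t))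
          intro x hx
          rw [norm_mul]
          exact mul_le_mul_of_nonneg_right (hFbd x hx) (norm_nonneg _)
      _ = 3 / t * ∫ x in A..B, ‖deriv ψ x‖ := intervalIntegral.integral_const_mul _ _
  calc ‖∫ x in A..B, f x * ψ x‖
      = ‖F B * ψ B - ∫ x in A..B, F x * deriv ψ x‖ := by rw [hsplit]
    _ ≤ ‖F B * ψ B‖ + ‖∫ x in A..B, F x * deriv ψ x‖ := norm_sub_le _ _
    _ ≤ 3 / t * ‖ψ B‖ + 3 / t * ∫ x in A..B, ‖deriv ψ x‖ := add_le_add hb1 hb2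
    _ = 3 * t⁻¹ * (‖ψ B‖ + ∫ x in A..B, ‖deriv ψ x‖) := by
        rw [div_eq_mul_inv]
        ring
end

section
/- For each 0 < κ < 1/4 and K > 0, the set D' = {ω ∈ [0,2π]^n : |k·ω + j| ≥ κ(1+|j|) for all j ∈ ℤ and all k ∈ ℤ^n \ {0} with |k| ≤ K} satisfies Meas([0,2π]^n \ D') ≤ c(n) K^{n+1} κ, where c(n) depends only on n. -/
/-!
A frequency `ω` violating the Diophantine condition lies, for some `0 < ‖k‖ ≤ K` and some integer
`j`, in the slab `|k·ω + j| < κ(1 + |j|)`. On the cube `|k·ω| ≤ 2πn‖k‖`, so `κ ≤ 1/2` forces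
`|j| ≤ 4πn‖k‖ + 1`: only `O(n‖k‖)` slabs occur, each of width `O(n‖k‖κ)` across the level sets
of `k·ω`. Integrating first over a coordinate `i` with `|kᵢ| = ‖k‖` (Fubini), each slab has
measure `O((2π)^n nκ)`, so the resonances of a fixed `k` cost `O(n²(2π)^n ‖k‖κ)`. Summing over the
at most `(2K + 1)^n` lattice points `k` gives `c(n) K^(n+1) κ`.
-/

open MeasureTheory Real
open scoped ENNReal

theorem volume_setOf_abs_mul_add_lt_le {a : ℝ} (ha : a ≠ 0) (c δ : ℝ) :
    volume {t : ℝ | |a * t + c| < δ} ≤ ENNReal.ofReal (2 * δ / |a|) := by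
  have hsub : {t : ℝ | |a * t + c| < δ} ⊆ Metric.ball (-c / a) (δ / |a|) := by
    intro t ht
    rw [Metric.mem_ball, Real.dist_eq, show t - -c / a = (a * t + c) / a by field_simp; ring,
      abs_div]
    exact div_lt_div_of_pos_right ht (abs_pos.2 ha)
  calc volume {t : ℝ | |a * t + c| < δ} ≤ volume (Metric.ball (-c / a) (δ / |a|)) :=
        measure_mono hsub
    _ = ENNReal.ofReal (2 * δ / |a|) := by rw [Real.volume_ball, mul_div_assoc]

theorem MeasureTheory.Measure.prod_apply_le_of_slice_le {α β : Type*} [MeasurableSpace α]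
    [MeasurableSpace β] {μ : Measure α} {ν : Measure β} [SFinite μ] [SFinite ν] {s : Set (α × β)}
    (hs : MeasurableSet s) {t : Set β} (hst : ∀ p ∈ s, p.2 ∈ t) {C : ℝ≥0∞}
    (hC : ∀ y ∈ t, μ {x | (x, y) ∈ s} ≤ C) :
    μ.prod ν s ≤ C * ν t := by
  rw [Measure.prod_apply_symm hs]
  calc ∫⁻ y, μ ((fun x => (x, y)) ⁻¹' s) ∂ν ≤ ∫⁻ y, t.indicator (fun _ => C) y ∂ν := by
        refine lintegral_mono fun y => ?_
        by_cases hy : y ∈ t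
        · rw [Set.indicator_of_mem hy]
          exact hC y hy
        · have : (fun x => (x, y)) ⁻¹' s = ∅ :=
            Set.eq_empty_of_forall_notMem fun x hx => hy (hst _ hx)
          simp [this]
    _ ≤ C * ν t := lintegral_indicator_const_le t C

theorem volume_pi_Icc_inter_abs_sum_lt_le {n : ℕ} {L : ℝ} (hL : 0 ≤ L) {a : Fin n → ℝ}
    {i₀ : Fin n} (ha : a i₀ ≠ 0) (c δ : ℝ) :
    volume ((Set.univ.pi fun _ => Set.Icc 0 L) ∩ {ω | |(∑ i, a i * ω i) + c| < δ}) ≤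
      ENNReal.ofReal (L ^ (n - 1) * (2 * δ / |a i₀|)) := by
  obtain ⟨m, rfl⟩ : ∃ m, n = m + 1 := ⟨n - 1, by have := i₀.pos; omega⟩
  set e := MeasurableEquiv.piFinSuccAbove (fun _ => ℝ) i₀
  set E : Set (ℝ × (Fin m → ℝ)) := {p | p.2 ∈ Set.univ.pi (fun _ => Set.Icc 0 L) ∧
    |a i₀ * p.1 + ((∑ j, a (i₀.succAbove j) * p.2 j) + c)| < δ}
  have hE : MeasurableSet E :=
    (MeasurableSet.univ_pi fun _ => measurableSet_Icc).preimage measurable_snd |>.inter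
      (measurableSet_lt (f := fun p : ℝ × (Fin m → ℝ) =>
        |a i₀ * p.1 + ((∑ j, a (i₀.succAbove j) * p.2 j) + c)|) (by fun_prop) measurable_const)
  have hsub : (Set.univ.pi fun _ => Set.Icc 0 L) ∩ {ω | |(∑ i, a i * ω i) + c| < δ} ⊆
      e ⁻¹' E := by
    rintro ω ⟨hbox, hω⟩
    refine ⟨fun j _ => hbox _ (Set.mem_univ _), ?_⟩
    rw [Set.mem_ofPred_eq, Fin.sum_univ_succAbove _ i₀] at hω
    simpa [e, add_assoc, Fin.removeNth] using hω
  calc _ ≤ volume (e ⁻¹' E) := measure_mono hsub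
    _ = (volume.prod volume) E :=
      (volume_preserving_piFinSuccAbove (fun _ => ℝ) i₀).measure_preimage hE.nullMeasurableSet
    _ ≤ ENNReal.ofReal (2 * δ / |a i₀|) * volume (Set.univ.pi fun _ : Fin m => Set.Icc 0 L) :=
      Measure.prod_apply_le_of_slice_le hE (fun p hp => hp.1) fun y hy => by
        simpa only [E, Set.mem_ofPred_eq, hy, true_and] using
          volume_setOf_abs_mul_add_lt_le ha ((∑ j, a (i₀.succAbove j) * y j) + c) δ
    _ = _ := by
      simp only [volume_pi_pi, Real.volume_Icc, sub_zero, Finset.prod_const, Finset.card_univ,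
        Fintype.card_fin, add_tsub_cancel_right, ← ENNReal.ofReal_pow hL]
      rw [mul_comm, ← ENNReal.ofReal_mul (by positivity)]

theorem abs_lt_one_add_two_mul_abs_of_abs_add_lt {x y κ : ℝ} (hκ : κ ≤ 1 / 2)
    (h : |x + y| < κ * (1 + |y|)) : |y| < 1 + 2 * |x| := by
  have hy : |y| ≤ |x + y| + |x| := by simpa using abs_sub (x + y) x
  have hκy : κ * (1 + |y|) ≤ 1 / 2 * (1 + |y|) := by gcongr
  linarith

theorem abs_sum_intCast_mul_le {ι : Type*} [Fintype ι] (k : ι → ℤ) (ω : ι → ℝ) :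
    |∑ i, (k i : ℝ) * ω i| ≤ Fintype.card ι * (‖k‖ * ‖ω‖) := by
  calc |∑ i, (k i : ℝ) * ω i| ≤ ∑ i, ‖k i‖ * ‖ω i‖ := by
        simpa only [abs_mul, Int.norm_eq_abs, Real.norm_eq_abs] using
          Finset.abs_sum_le_sum_abs (fun i => (k i : ℝ) * ω i) Finset.univ
    _ ≤ ∑ _i : ι, ‖k‖ * ‖ω‖ := by
        gcongr with i
        exacts [norm_le_pi_norm k i, norm_le_pi_norm ω i]
    _ = Fintype.card ι * (‖k‖ * ‖ω‖) := by simp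

theorem one_le_pi_norm_of_ne_zero {ι : Type*} [Fintype ι] {k : ι → ℤ} (hk : k ≠ 0) :
    1 ≤ ‖k‖ := by
  obtain ⟨i, hi⟩ := Function.ne_iff.1 hk
  calc (1 : ℝ) ≤ ‖k i‖ := by rw [Int.norm_eq_abs]; exact_mod_cast Int.one_le_abs hi
    _ ≤ ‖k‖ := norm_le_pi_norm k i

theorem exists_norm_apply_eq_pi_norm {ι : Type*} [Fintype ι] [Nonempty ι] {E : Type*}
    [SeminormedAddCommGroup E] (f : ι → E) : ∃ i, ‖f i‖ = ‖f‖ := by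
  obtain ⟨i, -, hi⟩ := Finset.exists_max_image Finset.univ (fun i => ‖f i‖) Finset.univ_nonempty
  exact ⟨i, le_antisymm (norm_le_pi_norm f i)
    ((pi_norm_le_iff_of_nonneg (norm_nonneg _)).2 fun j => hi j (Finset.mem_univ j))⟩

theorem card_piFinset_Icc_mul_le (N n : ℕ) :
    (Fintype.piFinset fun _ : Fin n => Finset.Icc (-(N : ℤ)) N).card * N ≤ 3 ^ n * N ^ (n + 1) := by
  rw [Fintype.card_piFinset_const, Int.card_Icc,
    show ((N : ℤ) + 1 - -N).toNat = 2 * N + 1 by omega]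
  rcases Nat.eq_zero_or_pos N with rfl | hN
  · simp
  · calc (2 * N + 1) ^ n * N ≤ (3 * N) ^ n * N := by gcongr; omega
      _ = 3 ^ n * N ^ (n + 1) := by ring

def resonantSet {n : ℕ} (κ : ℝ) (k : Fin n → ℤ) : Set (Fin n → ℝ) :=
  {ω | ∃ j : ℤ, |(∑ i, (k i : ℝ) * ω i) + j| < κ * (1 + |(j : ℝ)|)}

theorem pi_Icc_inter_resonantSet_subset {n : ℕ} {κ : ℝ} (hκ : κ ≤ 1 / 2) (k : Fin n → ℤ) :
    (Set.univ.pi fun _ => Set.Icc 0 (2 * π)) ∩ resonantSet κ k ⊆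
      ⋃ j ∈ Finset.Icc (-(⌈4 * π * n * ‖k‖⌉₊ : ℤ)) ⌈4 * π * n * ‖k‖⌉₊,
        (Set.univ.pi fun _ => Set.Icc 0 (2 * π)) ∩
          {ω | |(∑ i, (k i : ℝ) * ω i) + j| < κ * (1 + ⌈4 * π * n * ‖k‖⌉₊)} := by
  set J := ⌈4 * π * n * ‖k‖⌉₊
  rintro ω ⟨hω, j, hj⟩
  have hωn : ‖ω‖ ≤ 2 * π := (pi_norm_le_iff_of_nonneg (by positivity)).2 fun i => by
    obtain ⟨h0, h2π⟩ := hω i trivial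
    rw [Real.norm_eq_abs, abs_le]
    constructor <;> linarith [pi_pos]
  have hjJ : |(j : ℝ)| < J + 1 := calc
    |(j : ℝ)| < 1 + 2 * |∑ i, (k i : ℝ) * ω i| := abs_lt_one_add_two_mul_abs_of_abs_add_lt hκ hj
    _ ≤ 1 + 2 * (n * (‖k‖ * (2 * π))) := by grw [abs_sum_intCast_mul_le, Fintype.card_fin, hωn]
    _ ≤ J + 1 := by linarith [Nat.le_ceil (4 * π * n * ‖k‖)]
  have hjJ' : |j| ≤ J := by
    rw [← Int.cast_abs] at hjJ
    exact Int.lt_add_one_iff.1 (by exact_mod_cast hjJ)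
  have hκ0 : 0 ≤ κ :=
    (mul_nonneg_iff_of_pos_right (by positivity)).1 ((abs_nonneg _).trans hj.le)
  refine Set.mem_biUnion (Finset.mem_Icc.2 (abs_le.1 hjJ')) ⟨hω, hj.trans_le ?_⟩
  gcongr
  rw [← Int.cast_abs]
  exact_mod_cast hjJ'

theorem volume_pi_Icc_inter_resonantSet_le {n : ℕ} {κ : ℝ} (hκ : 0 ≤ κ) (hκ' : κ ≤ 1 / 2)
    {k : Fin n → ℤ} (hk : k ≠ 0) :
    volume ((Set.univ.pi fun _ => Set.Icc 0 (2 * π)) ∩ resonantSet κ k) ≤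
      ENNReal.ofReal (96 * π * n ^ 2 * (2 * π) ^ n * ‖k‖ * κ) := by
  have : Nonempty (Fin n) := ⟨(Function.ne_iff.1 hk).choose⟩
  obtain ⟨i₀, hi₀⟩ := exists_norm_apply_eq_pi_norm k
  have hk1 := one_le_pi_norm_of_ne_zero hk
  have hn : (1 : ℝ) ≤ n := by exact_mod_cast i₀.pos
  set X := 4 * π * n * ‖k‖
  set J := ⌈X⌉₊
  have hJ : (J : ℝ) < X + 1 := Nat.ceil_lt_add_one (by positivity)
  have hX : 12 ≤ X := by
    have := one_le_mul_of_one_le_of_one_le hn hk1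
    simp only [X]
    nlinarith [pi_gt_three]
  -- `2J + 1 ≤ 3X` and `1 + J ≤ 2X`, as `X ≥ 12`
  have hcount : (2 * J + 1) * (1 + J) ≤ 6 * X ^ 2 := by nlinarith
  calc _ ≤ ∑ j ∈ Finset.Icc (-(J : ℤ)) J, volume ((Set.univ.pi fun _ => Set.Icc 0 (2 * π)) ∩
          {ω | |(∑ i, (k i : ℝ) * ω i) + j| < κ * (1 + J)}) :=
        (measure_mono (pi_Icc_inter_resonantSet_subset hκ' k)).trans (measure_biUnion_finset_le _ _)
    _ ≤ ∑ _j ∈ Finset.Icc (-(J : ℤ)) J,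
          ENNReal.ofReal ((2 * π) ^ (n - 1) * (2 * (κ * (1 + J)) / ‖k‖)) := by
        gcongr with j
        rw [← hi₀, Int.norm_eq_abs]
        exact volume_pi_Icc_inter_abs_sum_lt_le (by positivity) (a := fun i => (k i : ℝ))
          (Int.cast_ne_zero.2 (norm_ne_zero_iff.1 (by linarith))) (j : ℝ) (κ * (1 + J))
    _ = ENNReal.ofReal ((2 * J + 1) * ((2 * π) ^ (n - 1) * (2 * (κ * (1 + J)) / ‖k‖))) := by
        rw [Finset.sum_const, Int.card_Icc,
          show (J : ℤ) + 1 - -J = ((2 * J + 1 : ℕ) : ℤ) by push_cast; ring, Int.toNat_natCast,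
          nsmul_eq_mul, ← ENNReal.ofReal_natCast, ← ENNReal.ofReal_mul (by positivity)]
        push_cast
        rfl
    _ ≤ ENNReal.ofReal ((2 * π) ^ (n - 1) * (2 * κ) * (6 * X ^ 2) / ‖k‖) := by
        refine ENNReal.ofReal_le_ofReal ?_
        calc _ = (2 * π) ^ (n - 1) * (2 * κ) * ((2 * J + 1) * (1 + J)) / ‖k‖ := by ring
          _ ≤ _ := by gcongr
    _ = _ := by
        congr 1
        simp only [X]
        rw [← pow_sub_one_mul (show n ≠ 0 from i₀.pos.ne')]
        field_simp
        ring

theorem volume_biUnion_resonantSet_le {n N : ℕ} {κ : ℝ} (hκ : 0 ≤ κ) (hκ' : κ ≤ 1 / 2) :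
    volume (⋃ k ∈ (Fintype.piFinset fun _ : Fin n => Finset.Icc (-(N : ℤ)) N).erase 0,
        (Set.univ.pi fun _ => Set.Icc 0 (2 * π)) ∩ resonantSet κ k) ≤
      ENNReal.ofReal (96 * π * n ^ 2 * (2 * π) ^ n * κ * (3 ^ n * N ^ (n + 1))) := by
  set S := (Fintype.piFinset fun _ : Fin n => Finset.Icc (-(N : ℤ)) N).erase 0
  have hS : (S.card : ℝ) * N ≤ 3 ^ n * N ^ (n + 1) := by
    exact_mod_cast (Nat.mul_le_mul_right N Finset.card_erase_le).trans
      (card_piFinset_Icc_mul_le N n)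
  calc _ ≤ ∑ k ∈ S, volume ((Set.univ.pi fun _ => Set.Icc 0 (2 * π)) ∩ resonantSet κ k) :=
        measure_biUnion_finset_le _ _
    _ ≤ ∑ _k ∈ S, ENNReal.ofReal (96 * π * n ^ 2 * (2 * π) ^ n * N * κ) := by
        gcongr with k hk
        refine (volume_pi_Icc_inter_resonantSet_le hκ hκ' (Finset.mem_erase.1 hk).1).trans
          (ENNReal.ofReal_le_ofReal ?_)
        gcongr
        refine (pi_norm_le_iff_of_nonneg (Nat.cast_nonneg N)).2 fun i => ?_
        rw [Int.norm_eq_abs, abs_le]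
        exact_mod_cast Finset.mem_Icc.1 (Fintype.mem_piFinset.1 (Finset.mem_erase.1 hk).2 i)
    _ = ENNReal.ofReal (96 * π * n ^ 2 * (2 * π) ^ n * κ * (S.card * N)) := by
        rw [Finset.sum_const, nsmul_eq_mul, ← ENNReal.ofReal_natCast,
          ← ENNReal.ofReal_mul (by positivity)]
        ring_nf
    _ ≤ _ := ENNReal.ofReal_le_ofReal (by gcongr)

/-- Second Melnikov measure estimate: for `0 < κ < 1/4` and `K > 0`, the set of
frequencies `ω ∈ [0,2π]^n` satisfying `|k·ω + j| ≥ κ(1+|j|)` for all integers `j`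
and all nonzero integer vectors `k` with sup-norm at most `K` has complement of
measure at most `c(n) K^(n+1) κ`. -/
theorem melnikov_measure_estimate (n : ℕ) :
    ∃ c > 0, ∀ (κ K : ℝ), 0 < κ → κ < 1/4 → 0 < K →
      volume ((Set.univ.pi fun _ : Fin n => Set.Icc (0:ℝ) (2*π)) \
        {ω : Fin n → ℝ | ω ∈ (Set.univ.pi fun _ : Fin n => Set.Icc (0:ℝ) (2*π)) ∧
          ∀ (j : ℤ) (k : Fin n → ℤ), k ≠ 0 → (∀ i, (|k i| : ℝ) ≤ K) →
            κ * (1 + |(j : ℝ)|) ≤ |(∑ i, (k i : ℝ) * ω i) + (j : ℝ)|}) ≤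
      ENNReal.ofReal (c * K ^ (n+1) * κ) := by
  -- `(n + 1) ^ 2` rather than `n ^ 2` keeps `c` positive for `n = 0`
  refine ⟨96 * π * (n + 1) ^ 2 * 3 ^ n * (2 * π) ^ n, by positivity, fun κ K hκ hκ4 hK => ?_⟩
  set N := ⌊K⌋₊
  refine (measure_mono (?_ : _ ⊆ ⋃ k ∈ (Fintype.piFinset fun _ : Fin n =>
    Finset.Icc (-(N : ℤ)) N).erase 0, (Set.univ.pi fun _ => Set.Icc 0 (2 * π)) ∩
      resonantSet κ k)).trans ((volume_biUnion_resonantSet_le hκ.le (by linarith)).trans ?_)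
  · rintro ω ⟨hω, hgood⟩
    simp only [Set.mem_ofPred_eq, not_and, not_forall, not_le] at hgood
    obtain ⟨j, k, hk, hkK, hj⟩ := hgood hω
    refine Set.mem_biUnion (Finset.mem_erase.2 ⟨hk, Fintype.mem_piFinset.2 fun i => ?_⟩)
      ⟨hω, j, hj⟩
    have := Nat.le_floor (show ((k i).natAbs : ℝ) ≤ K by
      rw [Nat.cast_natAbs]; push_cast; exact hkK i)
    rw [Finset.mem_Icc]
    omega
  refine ENNReal.ofReal_le_ofReal ?_
  have hNK : (N : ℝ) ^ (n + 1) ≤ K ^ (n + 1) := by gcongr; exact Nat.floor_le hK.le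
  calc _ ≤ 96 * π * (n + 1) ^ 2 * (2 * π) ^ n * κ * (3 ^ n * K ^ (n + 1)) := by
        gcongr
        linarith
    _ = _ := by ring
end

section
/- Fix β with 1 < β < 2 and constants X_m, X_n with 0 < 2X_m < X_n, and k real with 0 < k ≤ X_n^{2−β}/8. Define g(x) = √(X_n² − x²) − √(X_m² − x²) − kβ x^{β−1} on [0, X_m). Then g(x) ≥ X_n/4 for all x ∈ [0, X_m). -/
open Real

/-! The square-root part of the phase derivative is at least `X_n - X_m > X_n/2`, because
`x ↦ √(a² - x²) - √(b² - x²)` is smallest at `x = 0` when `b ≤ a`. The power term is at most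
`2k X_n^(β-1) ≤ X_n/4`, since the exponents of `X_n^(2-β)` and `X_n^(β-1)` add up to `1`. -/

theorem Real.sub_le_sqrt_sub_sub_sqrt_sub {a b c : ℝ} (hb : 0 ≤ b) (hba : b ≤ a) (hc0 : 0 ≤ c)
    (hc : c ≤ b ^ 2) :
    a - b ≤ √(a ^ 2 - c) - √(b ^ 2 - c) := by
  have hs0 : 0 ≤ √(b ^ 2 - c) := sqrt_nonneg _
  have hs2 : √(b ^ 2 - c) ^ 2 = b ^ 2 - c := sq_sqrt (by linarith)
  have hsb : √(b ^ 2 - c) ≤ b := sqrt_le_iff.2 ⟨hb, by linarith⟩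
  suffices a - b + √(b ^ 2 - c) ≤ √(a ^ 2 - c) by linarith
  apply le_sqrt_of_sq_le
  nlinarith [mul_le_mul_of_nonneg_left hsb (sub_nonneg.2 hba)]

theorem Real.rpow_sub_one_mul_rpow_two_sub_le {x X β : ℝ} (hx : 0 ≤ x) (hxX : x ≤ X)
    (hβ : 1 ≤ β) :
    x ^ (β - 1) * X ^ (2 - β) ≤ X := by
  have hX : 0 ≤ X := hx.trans hxX
  calc x ^ (β - 1) * X ^ (2 - β) ≤ X ^ (β - 1) * X ^ (2 - β) := by gcongr
    _ = X := by rw [← rpow_add' hX (by norm_num), show β - 1 + (2 - β) = 1 by ring, rpow_one]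

theorem phase_derivative_lower_bound_general (β Xm Xn k : ℝ)
    (hβ1 : 1 < β) (hβ2 : β < 2) (hXn : 2 * Xm < Xn)
    (hk : 0 < k) (hk' : k ≤ Xn ^ (2 - β) / 8) :
    ∀ x ∈ Set.Ico (0:ℝ) Xm,
      Xn / 4 ≤ Real.sqrt (Xn^2 - x^2) - Real.sqrt (Xm^2 - x^2) - k * β * x ^ (β - 1) := by
  rintro x ⟨hx0, hxXm⟩
  have hsqrt : Xn - Xm ≤ √(Xn ^ 2 - x ^ 2) - √(Xm ^ 2 - x ^ 2) :=
    sub_le_sqrt_sub_sub_sqrt_sub (by linarith) (by linarith) (sq_nonneg x) (by nlinarith)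
  have hpow : x ^ (β - 1) * Xn ^ (2 - β) ≤ Xn :=
    rpow_sub_one_mul_rpow_two_sub_le hx0 (by linarith) hβ1.le
  have hxpow : 0 ≤ x ^ (β - 1) := rpow_nonneg hx0 _
  have hterm : k * β * x ^ (β - 1) ≤ Xn / 4 :=
    calc k * β * x ^ (β - 1) ≤ k * 2 * x ^ (β - 1) := by gcongr
      _ ≤ Xn ^ (2 - β) / 4 * x ^ (β - 1) := by gcongr; linarith
      _ ≤ Xn / 4 := by linarith
  linarith

/-- For `1 < β < 2`, `0 < 2X_m < X_n` and `0 < k ≤ X_n^(2−β)/8`, the phase derivative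
`g(x) = √(X_n² − x²) − √(X_m² − x²) − kβ x^(β−1)` is at least `X_n/4` on `[0, X_m)`. -/
theorem phase_derivative_lower_bound (β Xm Xn k : ℝ)
    (hβ1 : 1 < β) (hβ2 : β < 2) (hXm : 0 < Xm) (hXn : 2 * Xm < Xn)
    (hk : 0 < k) (hk' : k ≤ Xn ^ (2 - β) / 8) :
    ∀ x ∈ Set.Ico (0:ℝ) Xm,
      Xn / 4 ≤ Real.sqrt (Xn^2 - x^2) - Real.sqrt (Xm^2 - x^2) - k * β * x ^ (β - 1) :=
  phase_derivative_lower_bound_general β Xm Xn k hβ1 hβ2 hXn hk hk'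
end

section
/- Fix X_m, X_n with 0 < X_m ≤ X_n and k real. Define g(x) = √(X_n² − x²) − √(X_m² − x²) − 2kx on [0, X_m). Then g''(x) ≥ g''(0) = 1/X_m − 1/X_n for all x ∈ [0, X_m). -/
/-!
Differentiating twice, `g'' x = Xm² / (Xm² - x²)^(3/2) - Xn² / (Xn² - x²)^(3/2)`. Scaling `x = a t`
turns each term into `F (x / a) / a` with `F t = (1 - t²)^(-3/2)`, which is `≥ 1 = F 0` and
increasing on `[0, 1)`. Hence `g'' x - g'' 0 = (F (x / Xm) - 1) / Xm - (F (x / Xn) - 1) / Xn ≥ 0`: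
since `Xm ≤ Xn`, `Xm` wins both in the prefactor `1 / a` and in the argument `x / a`.
-/

open Real

lemma hasDerivAt_sqrt_sq_sub_sq {a x : ℝ} (h : x ^ 2 < a ^ 2) :
    HasDerivAt (fun y => √(a ^ 2 - y ^ 2)) (-x / √(a ^ 2 - x ^ 2)) x := by
  have hpos : 0 < a ^ 2 - x ^ 2 := sub_pos.mpr h
  have hs : 0 < √(a ^ 2 - x ^ 2) := sqrt_pos.mpr hpos
  have hd := ((hasDerivAt_pow 2 x).const_sub (a ^ 2)).sqrt hpos.ne'
  refine hd.congr_deriv ?_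
  field_simp
  norm_num

lemma hasDerivAt_div_sqrt_sq_sub_sq {a x : ℝ} (h : x ^ 2 < a ^ 2) :
    HasDerivAt (fun y => y / √(a ^ 2 - y ^ 2)) (a ^ 2 / √(a ^ 2 - x ^ 2) ^ 3) x := by
  have hpos : 0 < a ^ 2 - x ^ 2 := sub_pos.mpr h
  have hs : 0 < √(a ^ 2 - x ^ 2) := sqrt_pos.mpr hpos
  have hsq : √(a ^ 2 - x ^ 2) ^ 2 = a ^ 2 - x ^ 2 := sq_sqrt hpos.le
  refine ((hasDerivAt_id x).div (hasDerivAt_sqrt_sq_sub_sq h) hs.ne').congr_deriv ?_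
  field_simp
  simp only [id]
  linear_combination hsq

lemma deriv_deriv_sqrt_sub_sqrt_sub_linear {a b k x : ℝ} (hab : a ^ 2 ≤ b ^ 2)
    (hx : x ^ 2 < a ^ 2) :
    deriv (deriv fun y => √(b ^ 2 - y ^ 2) - √(a ^ 2 - y ^ 2) - 2 * k * y) x
      = a ^ 2 / √(a ^ 2 - x ^ 2) ^ 3 - b ^ 2 / √(b ^ 2 - x ^ 2) ^ 3 := by
  have hderiv : deriv (fun y => √(b ^ 2 - y ^ 2) - √(a ^ 2 - y ^ 2) - 2 * k * y)
      =ᶠ[nhds x] fun y => y / √(a ^ 2 - y ^ 2) - y / √(b ^ 2 - y ^ 2) - 2 * k := by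
    have hU : IsOpen {y : ℝ | y ^ 2 < a ^ 2} := isOpen_lt (continuous_pow 2) continuous_const
    filter_upwards [hU.mem_nhds hx] with y hy
    refine (((hasDerivAt_sqrt_sq_sub_sq (hy.trans_le hab)).sub
      (hasDerivAt_sqrt_sq_sub_sq hy)).sub ((hasDerivAt_id y).const_mul (2 * k))).deriv.trans ?_
    ring
  rw [hderiv.deriv_eq]
  exact (((hasDerivAt_div_sqrt_sq_sub_sq hx).sub
    (hasDerivAt_div_sqrt_sq_sub_sq (hx.trans_le hab))).sub_const (2 * k)).deriv

lemma sq_div_sqrt_sq_sub_sq_pow_three {a : ℝ} (ha : 0 < a) (x : ℝ) :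
    a ^ 2 / √(a ^ 2 - x ^ 2) ^ 3 = (√(1 - (x / a) ^ 2) ^ 3)⁻¹ / a := by
  have hscale : √(a ^ 2 - x ^ 2) = a * √(1 - (x / a) ^ 2) := by
    rw [← sqrt_sq ha.le, ← sqrt_mul (sq_nonneg a), sqrt_sq ha.le]
    congr 1
    field_simp
  rw [hscale]
  field_simp

lemma inv_sqrt_one_sub_sq_pow_three_le {u v : ℝ} (hu : 0 ≤ u) (huv : u ≤ v) (hv : v < 1) :
    (√(1 - u ^ 2) ^ 3)⁻¹ ≤ (√(1 - v ^ 2) ^ 3)⁻¹ := by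
  have hv2 : 0 < 1 - v ^ 2 := by nlinarith
  gcongr

lemma inv_sqrt_one_sub_sq_pow_three_sub_one_div_le {a b x : ℝ} (ha : 0 < a) (hab : a ≤ b)
    (hx0 : 0 ≤ x) (hxa : x < a) :
    ((√(1 - (x / b) ^ 2) ^ 3)⁻¹ - 1) / b ≤ ((√(1 - (x / a) ^ 2) ^ 3)⁻¹ - 1) / a := by
  have hxb : 0 ≤ x / b := div_nonneg hx0 (ha.le.trans hab)
  have hratio : x / b ≤ x / a := div_le_div_of_nonneg_left hx0 ha hab
  have hunit : x / a < 1 := (div_lt_one ha).mpr hxa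
  have hone : 1 ≤ (√(1 - (x / b) ^ 2) ^ 3)⁻¹ := by
    simpa using inv_sqrt_one_sub_sq_pow_three_le le_rfl hxb (hratio.trans_lt hunit)
  have hmono := inv_sqrt_one_sub_sq_pow_three_le hxb hratio hunit
  calc ((√(1 - (x / b) ^ 2) ^ 3)⁻¹ - 1) / b
      ≤ ((√(1 - (x / b) ^ 2) ^ 3)⁻¹ - 1) / a :=
        div_le_div_of_nonneg_left (sub_nonneg.mpr hone) ha hab
    _ ≤ ((√(1 - (x / a) ^ 2) ^ 3)⁻¹ - 1) / a := by gcongr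

/-- For `0 < X_m ≤ X_n` and real `k`, the function
`g(x) = √(X_n² − x²) − √(X_m² − x²) − 2kx` satisfies
`g''(x) ≥ g''(0) = 1/X_m − 1/X_n` on `[0, X_m)`. -/
theorem phase_second_derivative_min_at_zero (Xm Xn k : ℝ)
    (hXm : 0 < Xm) (hmn : Xm ≤ Xn) :
    let g : ℝ → ℝ := fun x => Real.sqrt (Xn^2 - x^2) - Real.sqrt (Xm^2 - x^2) - 2 * k * x
    deriv (deriv g) 0 = 1 / Xm - 1 / Xn ∧
      ∀ x ∈ Set.Ico (0:ℝ) Xm, 1 / Xm - 1 / Xn ≤ deriv (deriv g) x := by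
  intro g
  have hXn : 0 < Xn := hXm.trans_le hmn
  have hsq : Xm ^ 2 ≤ Xn ^ 2 := pow_le_pow_left₀ hXm.le hmn 2
  have hg'' : ∀ x, x ^ 2 < Xm ^ 2 → deriv (deriv g) x =
      (√(1 - (x / Xm) ^ 2) ^ 3)⁻¹ / Xm - (√(1 - (x / Xn) ^ 2) ^ 3)⁻¹ / Xn := fun x hx => by
    rw [deriv_deriv_sqrt_sub_sqrt_sub_linear hsq hx, sq_div_sqrt_sq_sub_sq_pow_three hXm,
      sq_div_sqrt_sq_sub_sq_pow_three hXn]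
  constructor
  · simpa using hg'' 0 (pow_lt_pow_left₀ hXm le_rfl two_ne_zero)
  · rintro x ⟨hx0, hxXm⟩
    have hscaled := inv_sqrt_one_sub_sq_pow_three_sub_one_div_le hXm hmn hx0 hxXm
    rw [sub_div, sub_div] at hscaled
    rw [hg'' x (pow_lt_pow_left₀ hxXm hx0 two_ne_zero)]
    linarith
end

section
/- Fix positive reals X_m ≤ X_n ≤ 2X_m and k > 0 with X_n² − X_m² ≤ k X_m^{4/3}. Define g(x) = √(X_n² − x²) − √(X_m² − x²) − 2kx. Then for all x ∈ [X_m^{2/3}, X_m − X_m^{5/9}] (assuming X_m is large enough that this interval is nonempty and contained in (0, X_m)), g(x) ≤ −(3/2)k; in particular |g(x)| ≥ (3/2)k on that interval. -/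
open Real

/- On `[X_m^{2/3}, X_m − X_m^{5/9}]` one has `X_m² − x² = (X_m − x)(X_m + x) ≥ X_m^{14/9}`, so the
tangent-line bound `√b − √a ≤ (b − a)/(2√a)` for the concave square root gives
`√(X_n² − x²) − √(X_m² − x²) ≤ k X_m^{4/3} / (2 X_m^{7/9}) = (k/2) X_m^{5/9} ≤ (k/2) x`.
Hence `g(x) ≤ −(3/2) k x ≤ −(3/2) k`, because the interval forces `X_m > 1` and so `x ≥ 1`. -/

theorem Real.one_lt_of_rpow_lt_self {X p : ℝ} (hX : 0 < X) (hp : p ≤ 1) (h : X ^ p < X) :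
    1 < X := by
  by_contra! hX1
  have : X ^ (1 : ℝ) ≤ X ^ p := rpow_le_rpow_of_exponent_ge hX hX1 hp
  rw [rpow_one] at this
  linarith

theorem Real.sqrt_sub_sqrt_le_div {a b : ℝ} (ha : 0 < a) (hb : 0 ≤ b) :
    √b - √a ≤ (b - a) / (2 * √a) := by
  have hsa : 0 < √a := sqrt_pos.2 ha
  rw [le_div_iff₀ (by positivity)]
  nlinarith [sq_nonneg (√b - √a), sq_sqrt ha.le, sq_sqrt hb]

theorem Real.rpow_add_one_le_sq_sub_sq {X x q : ℝ} (hX : 0 < X) (hx0 : 0 ≤ x)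
    (hx : x ≤ X - X ^ q) : X ^ (q + 1) ≤ X ^ 2 - x ^ 2 := by
  rw [rpow_add_one hX.ne', sq_sub_sq, mul_comm (X + x)]
  exact mul_le_mul (by linarith) (by linarith) hX.le (by linarith [rpow_nonneg hX.le q])

theorem Real.sqrt_sub_sqrt_le_of_sq_sub_sq_le {X Y x k : ℝ} (hX : 0 < X) (hXY : X ≤ Y)
    (hx0 : 0 ≤ x) (hx : x ≤ X - X ^ ((5 : ℝ) / 9))
    (hgap : Y ^ 2 - X ^ 2 ≤ k * X ^ ((4 : ℝ) / 3)) :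
    √(Y ^ 2 - x ^ 2) - √(X ^ 2 - x ^ 2) ≤ k / 2 * X ^ ((5 : ℝ) / 9) := by
  have hXY2 : X ^ 2 ≤ Y ^ 2 := pow_le_pow_left₀ hX.le hXY 2
  have hxX : x ≤ X := by linarith [rpow_nonneg hX.le ((5 : ℝ) / 9)]
  have hsqrt : X ^ ((7 : ℝ) / 9) ≤ √(X ^ 2 - x ^ 2) := by
    rw [le_sqrt (by positivity) (by nlinarith), ← rpow_natCast, ← rpow_mul hX.le]
    convert rpow_add_one_le_sq_sub_sq hX hx0 hx using 2
    norm_num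
  have hsqrt_pos : 0 < √(X ^ 2 - x ^ 2) := (rpow_pos_of_pos hX _).trans_le hsqrt
  calc √(Y ^ 2 - x ^ 2) - √(X ^ 2 - x ^ 2)
      ≤ (Y ^ 2 - x ^ 2 - (X ^ 2 - x ^ 2)) / (2 * √(X ^ 2 - x ^ 2)) :=
        sqrt_sub_sqrt_le_div (sqrt_pos.1 hsqrt_pos) (by linarith [sqrt_pos.1 hsqrt_pos])
    _ ≤ k * X ^ ((4 : ℝ) / 3) / (2 * X ^ ((7 : ℝ) / 9)) :=
        div_le_div₀ (by linarith) (by linarith) (by positivity) (by linarith)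
    _ = k / 2 * X ^ ((5 : ℝ) / 9) := by
        rw [show (5 : ℝ) / 9 = 4 / 3 - 7 / 9 by norm_num, rpow_sub hX]
        field_simp

theorem phase_derivative_upper_bound_comparable_general (Xm Xn k : ℝ)
    (hXm : 0 < Xm) (h1 : Xm ≤ Xn) (hk : 0 < k)
    (hgap : Xn^2 - Xm^2 ≤ k * Xm ^ ((4:ℝ)/3)) :
    ∀ x ∈ Set.Icc (Xm ^ ((2:ℝ)/3)) (Xm - Xm ^ ((5:ℝ)/9)),
      Real.sqrt (Xn^2 - x^2) - Real.sqrt (Xm^2 - x^2) - 2 * k * x ≤ -(3/2) * k ∧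
      (3/2) * k ≤ |Real.sqrt (Xn^2 - x^2) - Real.sqrt (Xm^2 - x^2) - 2 * k * x| := by
  rintro x ⟨hx_lo, hx_hi⟩
  have hXm1 : 1 < Xm := one_lt_of_rpow_lt_self hXm (by norm_num) <|
    hx_lo.trans_lt (hx_hi.trans_lt (by linarith [rpow_pos_of_pos hXm ((5 : ℝ) / 9)]))
  have hx1 : 1 ≤ x := (one_le_rpow hXm1.le (by norm_num)).trans hx_lo
  have hpow_le : Xm ^ ((5 : ℝ) / 9) ≤ x :=
    (rpow_le_rpow_of_exponent_le hXm1.le (by norm_num)).trans hx_lo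
  have hdiff := sqrt_sub_sqrt_le_of_sq_sub_sq_le hXm h1 (by linarith) hx_hi hgap
  have hg : √(Xn ^ 2 - x ^ 2) - √(Xm ^ 2 - x ^ 2) - 2 * k * x ≤ -(3 / 2) * k := by
    linarith [mul_le_mul_of_nonneg_left hpow_le hk.le, mul_le_mul_of_nonneg_left hx1 hk.le]
  exact ⟨hg, by linarith [neg_le_abs (√(Xn ^ 2 - x ^ 2) - √(Xm ^ 2 - x ^ 2) - 2 * k * x)]⟩

/-- For `X_m ≤ X_n ≤ 2X_m`, `k > 0`, `X_n² − X_m² ≤ kX_m^{4/3}`, the phase derivative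
`g(x) = √(X_n² − x²) − √(X_m² − x²) − 2kx` satisfies `g(x) ≤ −(3/2)k`, hence
`|g(x)| ≥ (3/2)k`, on `[X_m^{2/3}, X_m − X_m^{5/9}]`. -/
theorem phase_derivative_upper_bound_comparable (Xm Xn k : ℝ)
    (hXm : 0 < Xm) (h1 : Xm ≤ Xn) (h2 : Xn ≤ 2 * Xm) (hk : 0 < k)
    (hgap : Xn^2 - Xm^2 ≤ k * Xm ^ ((4:ℝ)/3))
    (hne : Xm ^ ((2:ℝ)/3) ≤ Xm - Xm ^ ((5:ℝ)/9)) :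
    ∀ x ∈ Set.Icc (Xm ^ ((2:ℝ)/3)) (Xm - Xm ^ ((5:ℝ)/9)),
      Real.sqrt (Xn^2 - x^2) - Real.sqrt (Xm^2 - x^2) - 2 * k * x ≤ -(3/2) * k ∧
      (3/2) * k ≤ |Real.sqrt (Xn^2 - x^2) - Real.sqrt (Xm^2 - x^2) - 2 * k * x| :=
  phase_derivative_upper_bound_comparable_general Xm Xn k hXm h1 hk hgap
end
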